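/- Let f : [0,∞) → ℝ be twice continuously differentiable with ‖f'‖ = sup_{y ≥ 0} |f'(y)| and ‖f''‖ = sup_{y ≥ 0} |f''(y)| both finite. Then for every integer n ≥ 1 and every x ≥ 0, |G_n(f;x) − f(x)| ≤ ‖f'‖·√(x/n + 6/n²) + (1/2)·‖f''‖·(x/n + 6/n²), where G_n is the operator attached to the multiple Sheffer polynomials (x+1)^{k₁+k₂}. -/

import Mathlib

/-- The Szász-type operator attached to the multiple Sheffer polynomials
`(x+1)^{k₁+k₂}` (the case `A(t₁,t₂) = e^{t₁+t₂}`, `H(t₁,t₂) = t₁+t₂`). -/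
noncomputable def Gxk (n : ℕ) (f : ℝ → ℝ) (x : ℝ) : ℝ :=
  Real.exp (-2 - n * x) *
    ∑' k : ℕ × ℕ, (n * x / 2 + 1) ^ (k.1 + k.2) / (k.1.factorial * k.2.factorial) *
      f ((k.1 + k.2 : ℝ) / n)

/-!
Since `e^{-2-nx} = e^{-a}·e^{-a}` for `a = nx/2 + 1`, the weights of `Gxk n · x` form the product
of two Poisson distributions of mean `a`; hence they sum to `1` and `k₁ + k₂` is Poisson of mean
`nx + 2`, whose second moment about `nx` is `2² + (nx + 2)`. So the weighted mean square distance of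
the nodes `(k₁ + k₂)/n` from `x` is `x/n + 6/n²`. By the mean value theorem `f` is `‖f'‖`-Lipschitz
on `[0, ∞)`, and Cauchy–Schwarz gives `|G_n(f;x) - f(x)| ≤ ‖f'‖·√(x/n + 6/n²)`.
-/

open Real Finset
open scoped Nat

section PoissonMoments

variable (r : ℝ)

theorem hasSum_pow_div_factorial : HasSum (fun m : ℕ => r ^ m / m !) (exp r) := by
  rw [exp_eq_exp_ℝ]
  exact NormedSpace.expSeries_div_hasSum_exp r

theorem hasSum_natCast_mul_pow_div_factorial :
    HasSum (fun m : ℕ => m * (r ^ m / m !)) (r * exp r) := by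
  refine (hasSum_nat_add_iff' 1).mp ?_
  rw [sum_range_one, Nat.cast_zero, zero_mul, sub_zero]
  refine ((hasSum_pow_div_factorial r).mul_left r).congr_fun fun m => ?_
  rw [Nat.factorial_succ]
  push_cast
  field_simp
  ring

theorem hasSum_natCast_sq_mul_pow_div_factorial :
    HasSum (fun m : ℕ => (m : ℝ) ^ 2 * (r ^ m / m !)) ((r ^ 2 + r) * exp r) := by
  refine (hasSum_nat_add_iff' 1).mp ?_
  rw [sum_range_one, Nat.cast_zero, zero_pow two_ne_zero, zero_mul, sub_zero,
    show (r ^ 2 + r) * exp r = r * (r * exp r + exp r) by ring]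
  refine (((hasSum_natCast_mul_pow_div_factorial r).add (hasSum_pow_div_factorial r)).mul_left
    r).congr_fun fun m => ?_
  rw [Nat.factorial_succ]
  push_cast
  field_simp
  ring

theorem hasSum_pow_div_factorial_mul_sub_sq (c : ℝ) :
    HasSum (fun m : ℕ => r ^ m / m ! * (m - c) ^ 2) (((r - c) ^ 2 + r) * exp r) := by
  rw [show ((r - c) ^ 2 + r) * exp r
      = (r ^ 2 + r) * exp r - 2 * c * (r * exp r) + c ^ 2 * exp r by ring]
  refine (((hasSum_natCast_sq_mul_pow_div_factorial r).sub
    ((hasSum_natCast_mul_pow_div_factorial r).mul_left (2 * c))).add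
    ((hasSum_pow_div_factorial r).mul_left (c ^ 2))).congr_fun fun m => ?_
  ring

end PoissonMoments

theorem sum_antidiagonal_pow_div_factorial_mul (a : ℝ) (m : ℕ) :
    ∑ p ∈ antidiagonal m, a ^ (p.1 + p.2) / (p.1 ! * p.2 !) = (2 * a) ^ m / m ! := by
  rw [two_mul, (Commute.refl a).add_pow', sum_div]
  refine sum_congr rfl fun p hp => ?_
  rw [HasAntidiagonal.mem_antidiagonal] at hp
  subst hp
  rw [nsmul_eq_mul, ← pow_add, ← Nat.add_choose_mul_factorial_mul_factorial, Nat.choose_symm_add]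
  have : ((p.1 + p.2).choose p.2 : ℝ) ≠ 0 := Nat.cast_ne_zero.mpr (Nat.choose_pos (by omega)).ne'
  push_cast
  field_simp

theorem HasSum.prod_of_sum_antidiagonal_of_nonneg {F : ℕ × ℕ → ℝ} {u : ℕ → ℝ} {s : ℝ}
    (hF : ∀ p, 0 ≤ F p) (hu : ∀ m, ∑ p ∈ antidiagonal m, F p = u m) (h : HasSum u s) :
    HasSum F s := by
  set e := HasAntidiagonal.sigmaAntidiagonalEquivProd (A := ℕ)
  rw [← e.hasSum_iff]
  have hfiber (m : ℕ) : HasSum (fun p => (F ∘ e) ⟨m, p⟩) (u m) := by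
    rw [← hu, ← sum_coe_sort]
    exact hasSum_fintype _
  have hsum : Summable (F ∘ e) :=
    (summable_sigma_of_nonneg fun _ => hF _).2
      ⟨fun m => (hfiber m).summable, h.summable.congr fun m => (hfiber m).tsum_eq.symm⟩
  rw [← (hsum.hasSum.sigma hfiber).unique h]
  exact hsum.hasSum

section WeightedMean

variable {ι : Type*} {w y : ι → ℝ} {V : ℝ}

theorem summable_mul_abs_of_hasSum_mul_sq (hw : ∀ i, 0 ≤ w i) (hw1 : HasSum w 1)
    (hV : HasSum (fun i => w i * y i ^ 2) V) : Summable fun i => w i * |y i| := by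
  refine .of_nonneg_of_le (fun i => mul_nonneg (hw i) (abs_nonneg _))
    (fun i => ?_) ((hw1.summable.add hV.summable).div_const 2)
  have : |y i| ≤ (1 + y i ^ 2) / 2 := by nlinarith [sq_nonneg (|y i| - 1), sq_abs (y i)]
  calc w i * |y i| ≤ w i * ((1 + y i ^ 2) / 2) := mul_le_mul_of_nonneg_left this (hw i)
    _ = (w i + w i * y i ^ 2) / 2 := by ring

theorem tsum_mul_abs_le_sqrt (hw : ∀ i, 0 ≤ w i) (hw1 : HasSum w 1)
    (hV : HasSum (fun i => w i * y i ^ 2) V) : ∑' i, w i * |y i| ≤ √V := by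
  set m := ∑' i, w i * |y i|
  have hm : HasSum (fun i => w i * |y i|) m := (summable_mul_abs_of_hasSum_mul_sq hw hw1 hV).hasSum
  -- the variance of `|y|` is `V - m ^ 2`
  have hvar : HasSum (fun i => w i * (|y i| - m) ^ 2) (V - 2 * m * m + m ^ 2 * 1) :=
    ((hV.sub (hm.mul_left (2 * m))).add (hw1.mul_left (m ^ 2))).congr_fun fun i => by
      rw [← sq_abs (y i)]; ring
  have : m ^ 2 ≤ V := by
    nlinarith [hvar.nonneg fun i => mul_nonneg (hw i) (sq_nonneg (|y i| - m))]
  exact (le_abs_self m).trans (Real.abs_le_sqrt this)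

theorem abs_tsum_mul_sub_le_mul_sqrt {t : ι → ℝ} {g : ℝ → ℝ} {x M : ℝ}
    (hw : ∀ i, 0 ≤ w i) (hw1 : HasSum w 1) (hV : HasSum (fun i => w i * (t i - x) ^ 2) V)
    (hM : 0 ≤ M) (hg : ∀ i, |g (t i) - g x| ≤ M * |t i - x|) :
    |∑' i, w i * g (t i) - g x| ≤ M * √V := by
  have hdev : Summable fun i => w i * |t i - x| := summable_mul_abs_of_hasSum_mul_sq hw hw1 hV
  have hbound (i : ι) : |w i * (g (t i) - g x)| ≤ M * (w i * |t i - x|) := by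
    rw [abs_mul, abs_of_nonneg (hw i), mul_left_comm]
    exact mul_le_mul_of_nonneg_left (hg i) (hw i)
  have hsum : Summable fun i => w i * (g (t i) - g x) :=
    .of_norm_bounded (hdev.mul_left M) hbound
  have hsplit : ∑' i, w i * g (t i) - g x = ∑' i, w i * (g (t i) - g x) := by
    rw [((hsum.hasSum.add (hw1.mul_right (g x))).congr_fun fun i => by ring).tsum_eq]
    ring
  calc |∑' i, w i * g (t i) - g x| = |∑' i, w i * (g (t i) - g x)| := by rw [hsplit]
    _ ≤ ∑' i, M * (w i * |t i - x|) :=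
      (norm_tsum_le_tsum_norm hsum.norm).trans (hsum.norm.tsum_le_tsum hbound (hdev.mul_left M))
    _ ≤ M * √V := by
      rw [tsum_mul_left]
      exact mul_le_mul_of_nonneg_left (tsum_mul_abs_le_sqrt hw hw1 hV) hM

end WeightedMean

theorem abs_sub_le_iSup_mul_of_hasDerivWithinAt {s : Set ℝ} {f f' : ℝ → ℝ} (hs : Convex ℝ s)
    (hf : ∀ y ∈ s, HasDerivWithinAt f (f' y) s y) (hb : BddAbove (Set.range fun y : s => |f' y|))
    {x t : ℝ} (hx : x ∈ s) (ht : t ∈ s) : |f t - f x| ≤ (⨆ y : s, |f' y|) * |t - x| :=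
  hs.norm_image_sub_le_of_norm_hasDerivWithin_le hf (fun y hy => le_ciSup hb ⟨y, hy⟩) hx ht

noncomputable def gxkWeight (n : ℕ) (x : ℝ) (k : ℕ × ℕ) : ℝ :=
  exp (-2 - n * x) * ((n * x / 2 + 1) ^ (k.1 + k.2) / (k.1 ! * k.2 !))

theorem Gxk_eq_tsum (n : ℕ) (f : ℝ → ℝ) (x : ℝ) :
    Gxk n f x = ∑' k, gxkWeight n x k * f ((k.1 + k.2 : ℝ) / n) := by
  simp only [Gxk, gxkWeight, ← tsum_mul_left, mul_assoc]

theorem gxkWeight_nonneg {n : ℕ} {x : ℝ} (hx : 0 ≤ x) (k : ℕ × ℕ) : 0 ≤ gxkWeight n x k := by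
  unfold gxkWeight
  positivity

theorem sum_antidiagonal_gxkWeight (n : ℕ) (x : ℝ) (m : ℕ) :
    ∑ p ∈ antidiagonal m, gxkWeight n x p = exp (-(n * x + 2)) * ((n * x + 2) ^ m / m !) := by
  simp only [gxkWeight, ← mul_sum, sum_antidiagonal_pow_div_factorial_mul]
  rw [show -2 - n * x = -(n * x + 2) by ring, show 2 * (n * x / 2 + 1) = n * x + 2 by ring]

theorem hasSum_gxkWeight_mul {n : ℕ} {x s : ℝ} {h : ℕ → ℝ} (hx : 0 ≤ x) (hh : ∀ m, 0 ≤ h m)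
    (hs : HasSum (fun m : ℕ => (n * x + 2) ^ m / m ! * h m) s) :
    HasSum (fun k => gxkWeight n x k * h (k.1 + k.2)) (exp (-(n * x + 2)) * s) := by
  refine HasSum.prod_of_sum_antidiagonal_of_nonneg
    (fun k => mul_nonneg (gxkWeight_nonneg hx k) (hh _)) (fun m => ?_) (hs.mul_left _)
  rw [sum_congr rfl fun p hp => by rw [HasAntidiagonal.mem_antidiagonal.mp hp], ← sum_mul,
    sum_antidiagonal_gxkWeight, mul_assoc]

theorem hasSum_gxkWeight {n : ℕ} {x : ℝ} (hx : 0 ≤ x) : HasSum (gxkWeight n x) 1 := by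
  have := hasSum_gxkWeight_mul (h := fun _ => 1) hx (fun _ => zero_le_one)
    ((hasSum_pow_div_factorial (n * x + 2)).congr_fun fun m => mul_one _)
  rwa [← exp_add, neg_add_cancel, exp_zero, funext fun k => mul_one (gxkWeight n x k)] at this

theorem hasSum_gxkWeight_mul_sq {n : ℕ} {x : ℝ} (hn : n ≠ 0) (hx : 0 ≤ x) :
    HasSum (fun k => gxkWeight n x k * ((k.1 + k.2 : ℝ) / n - x) ^ 2)
      (x / n + 6 / (n : ℝ) ^ 2) := by
  have hn' : (n : ℝ) ≠ 0 := Nat.cast_ne_zero.mpr hn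
  have := hasSum_gxkWeight_mul (h := fun m => ((m : ℝ) / n - x) ^ 2) hx (fun _ => sq_nonneg _)
    (((hasSum_pow_div_factorial_mul_sub_sq (n * x + 2) (n * x)).div_const ((n : ℝ) ^ 2)).congr_fun
      fun m => by field_simp)
  convert this using 1
  · simp only [Nat.cast_add]
  · rw [exp_neg]
    field_simp
    ring

theorem Gxk_error_bound_general
    (f f' f'' : ℝ → ℝ)
    (hf' : ∀ y ∈ Set.Ici (0 : ℝ), HasDerivWithinAt f (f' y) (Set.Ici 0) y)
    (hb' : BddAbove (Set.range fun y : Set.Ici (0 : ℝ) => |f' y|))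
    (n : ℕ) (hn : 1 ≤ n) (x : ℝ) (hx : 0 ≤ x) :
    |Gxk n f x - f x| ≤
      (⨆ y : Set.Ici (0 : ℝ), |f' y|) * Real.sqrt (x / n + 6 / (n : ℝ) ^ 2) +
        1 / 2 * (⨆ y : Set.Ici (0 : ℝ), |f'' y|) * (x / n + 6 / (n : ℝ) ^ 2) := by
  have hM₂ : 0 ≤ ⨆ y : Set.Ici (0 : ℝ), |f'' y| := Real.iSup_nonneg fun _ => abs_nonneg _
  refine le_add_of_le_of_nonneg ?_ (by positivity)
  rw [Gxk_eq_tsum]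
  exact abs_tsum_mul_sub_le_mul_sqrt (gxkWeight_nonneg hx) (hasSum_gxkWeight hx)
    (hasSum_gxkWeight_mul_sq (by omega) hx) (Real.iSup_nonneg fun _ => abs_nonneg _)
    fun k => abs_sub_le_iSup_mul_of_hasDerivWithinAt (convex_Ici 0) hf' hb' hx
      (Set.mem_Ici.mpr (by positivity))

/-- for `f` twice continuously differentiable on `[0,∞)` with bounded
first and second derivatives,
`|G_n(f;x) − f(x)| ≤ ‖f'‖·√(x/n + 6/n²) + (1/2)·‖f''‖·(x/n + 6/n²)`. -/
theorem Gxk_error_bound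
    (f f' f'' : ℝ → ℝ)
    (hf' : ∀ y ∈ Set.Ici (0 : ℝ), HasDerivWithinAt f (f' y) (Set.Ici 0) y)
    (hf'' : ∀ y ∈ Set.Ici (0 : ℝ), HasDerivWithinAt f' (f'' y) (Set.Ici 0) y)
    (hf''c : ContinuousOn f'' (Set.Ici 0))
    (hb' : BddAbove (Set.range fun y : Set.Ici (0 : ℝ) => |f' y|))
    (hb'' : BddAbove (Set.range fun y : Set.Ici (0 : ℝ) => |f'' y|))
    (n : ℕ) (hn : 1 ≤ n) (x : ℝ) (hx : 0 ≤ x) :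
    |Gxk n f x - f x| ≤
      (⨆ y : Set.Ici (0 : ℝ), |f' y|) * Real.sqrt (x / n + 6 / (n : ℝ) ^ 2) +
        1 / 2 * (⨆ y : Set.Ici (0 : ℝ), |f'' y|) * (x / n + 6 / (n : ℝ) ^ 2) :=
  Gxk_error_bound_general f f' f'' hf' hb' n hn x hx
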